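/- Let N ∈ ℕ^d, let ξ^1,…,ξ^m ∈ 𝕋^d be knots and w_1,…,w_m ≥ 0 be weights such that Σ_{ν=1}^m w_ν f(ξ^ν) = (2π)^{-d} ∫_{𝕋^d} f(x) dx for every trigonometric polynomial f ∈ 𝒯(3N). Then there exist constants C_1(d), C_2(d) > 0 depending only on d such that for every 1 ≤ q ≤ ∞ and every f ∈ 𝒯(N): C_1(d) ‖f‖_q ≤ (Σ_{ν=1}^m w_ν |f(ξ^ν)|^q)^{1/q} ≤ C_2(d) ‖f‖_q, where for q = ∞ the middle quantity is interpreted as max over ν with w_ν > 0 of |f(ξ^ν)|. -/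

import Mathlib

open MeasureTheory

/-- The cube `[0,2π]^d` representing the torus `𝕋^d`. -/
def torusCube (d : ℕ) : Set (Fin d → ℝ) :=
  Set.univ.pi fun _ => Set.Icc (0 : ℝ) (2 * Real.pi)

/-- `f ∈ 𝒯(N)`: a trigonometric polynomial with frequencies `k ∈ ℤ^d`, `|k_j| ≤ N_j`. -/
def IsTrigPoly {d : ℕ} (N : Fin d → ℕ) (f : (Fin d → ℝ) → ℂ) : Prop :=
  ∃ c : (Fin d → ℤ) → ℂ,
    f = fun x => ∑ k ∈ Finset.Icc (fun j => -(N j : ℤ)) (fun j => (N j : ℤ)),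
      c k * Complex.exp (Complex.I * ((∑ j, (k j : ℝ) * x j : ℝ) : ℂ))

/-- The `L_q` norm (finite `q`) w.r.t. the normalized Lebesgue measure `(2π)^{-d} dx`. -/
noncomputable def LqNorm (d : ℕ) (q : ℝ) (f : (Fin d → ℝ) → ℂ) : ℝ :=
  (((2 * Real.pi) ^ d)⁻¹ * ∫ x in torusCube d, ‖f x‖ ^ q) ^ (1 / q)

/-- The sup norm on `𝕋^d`. -/
noncomputable def supNorm (d : ℕ) (f : (Fin d → ℝ) → ℂ) : ℝ :=
  sSup {r : ℝ | ∃ x ∈ torusCube d, r = ‖f x‖}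

/-!
The de la Vallée Poussin kernel `V_N(x) = ∏ⱼ (2 F_{2Nⱼ} - F_{Nⱼ})(xⱼ)`, built from Fejér kernels,
has Fourier coefficients `1` on the frequencies of `𝒯(N)` and `0` outside those of `𝒯(2N)`. Hence
`f(x) = ⨍ f(y) V_N(x - y) dy` for `f ∈ 𝒯(N)`, and since `y ↦ f(y) V_N(x - y)` lies in `𝒯(3N)`, the
same mean is computed exactly by the quadrature rule. Both representations are dominated by the
even, nonnegative majorant `M_N = ∏ⱼ (2 F_{2Nⱼ} + F_{Nⱼ})`, whose translates have mass `3 ^ d` for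
the normalized Lebesgue measure and for the quadrature measure alike. Schur's test for the kernel
`M_N(x - y)` between these two measures then gives both inequalities with constant `3 ^ d`: for
`q < ∞` through Hölder's inequality, and for `q = ∞` directly.
-/

open Complex
open scoped ComplexConjugate ENNReal

-- Jensen's inequality for `t ↦ t ^ q` with respect to the weight `K`, obtained from Hölder.
theorem ENNReal.rpow_lintegral_mul_le {α : Type*} [MeasurableSpace α] (μ : Measure α)
    {u K : α → ℝ≥0∞} (hu : AEMeasurable u μ) (hK : AEMeasurable K μ) {q : ℝ} (hq : 1 ≤ q) :
    (∫⁻ a, u a * K a ∂μ) ^ q ≤ (∫⁻ a, K a ∂μ) ^ (q - 1) * ∫⁻ a, u a ^ q * K a ∂μ := by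
  rcases hq.eq_or_lt with rfl | hq
  · simp
  set q' := q.conjExponent
  have hqq' : q.HolderConjugate q' := .conjExponent hq
  have hK1 : ∀ a, K a ^ (1 / q) * K a ^ (1 / q') = K a := fun a => by
    rw [← ENNReal.rpow_add_of_nonneg _ _ (by positivity) (by have := hqq'.symm.pos; positivity),
      hqq'.one_div_add_one_div, div_one, ENNReal.rpow_one]
  have holder := ENNReal.lintegral_mul_le_Lp_mul_Lq μ hqq'
    (f := fun a => u a * K a ^ (1 / q)) (g := fun a => K a ^ (1 / q'))
    (hu.mul (hK.pow_const _)) (hK.pow_const _)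
  simp only [Pi.mul_apply, mul_assoc, hK1] at holder
  simp only [ENNReal.mul_rpow_of_nonneg _ _ hqq'.nonneg, ← ENNReal.rpow_mul,
    one_div_mul_cancel hqq'.ne_zero, one_div_mul_cancel hqq'.symm.ne_zero,
    ENNReal.rpow_one] at holder
  calc (∫⁻ a, u a * K a ∂μ) ^ q
      ≤ ((∫⁻ a, u a ^ q * K a ∂μ) ^ (1 / q) * (∫⁻ a, K a ∂μ) ^ (1 / q')) ^ q :=
        ENNReal.rpow_le_rpow holder hqq'.nonneg
    _ = (∫⁻ a, K a ∂μ) ^ (q - 1) * ∫⁻ a, u a ^ q * K a ∂μ := by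
        rw [ENNReal.mul_rpow_of_nonneg _ _ hqq'.nonneg, ← ENNReal.rpow_mul, ← ENNReal.rpow_mul,
          one_div_mul_cancel hqq'.ne_zero, ENNReal.rpow_one, mul_comm, one_div_mul_eq_div,
          hqq'.div_conj_eq_sub_one]

-- Schur's test.
theorem lintegral_rpow_le_of_le_lintegral_kernel {α β : Type*} [MeasurableSpace α]
    [MeasurableSpace β] {μ : Measure α} {ν : Measure β} [SFinite μ] [SFinite ν]
    {K : β → α → ℝ≥0∞} (hK : Measurable (Function.uncurry K)) {u : α → ℝ≥0∞} (hu : Measurable u)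
    {v : β → ℝ≥0∞} {C : ℝ≥0∞} {q : ℝ} (hq : 1 ≤ q)
    (hv : ∀ b, v b ≤ ∫⁻ a, u a * K b a ∂μ) (hrow : ∀ b, ∫⁻ a, K b a ∂μ ≤ C)
    (hcol : ∀ a, ∫⁻ b, K b a ∂ν ≤ C) :
    ∫⁻ b, v b ^ q ∂ν ≤ C ^ q * ∫⁻ a, u a ^ q ∂μ := by
  have huK : Measurable (Function.uncurry fun b a => u a ^ q * K b a) :=
    ((hu.pow_const q).comp measurable_snd).mul hK
  have huK' : Measurable fun b => ∫⁻ a, u a ^ q * K b a ∂μ := huK.lintegral_prod_right'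
  calc ∫⁻ b, v b ^ q ∂ν
      ≤ ∫⁻ b, C ^ (q - 1) * ∫⁻ a, u a ^ q * K b a ∂μ ∂ν := by
        refine lintegral_mono fun b => ?_
        calc v b ^ q ≤ (∫⁻ a, u a * K b a ∂μ) ^ q := ENNReal.rpow_le_rpow (hv b) (by linarith)
          _ ≤ (∫⁻ a, K b a ∂μ) ^ (q - 1) * ∫⁻ a, u a ^ q * K b a ∂μ :=
            ENNReal.rpow_lintegral_mul_le μ hu.aemeasurable
              (hK.comp measurable_prodMk_left).aemeasurable hq
          _ ≤ C ^ (q - 1) * ∫⁻ a, u a ^ q * K b a ∂μ := by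
            gcongr
            exact hrow b
    _ = C ^ (q - 1) * ∫⁻ a, u a ^ q * ∫⁻ b, K b a ∂ν ∂μ := by
        rw [lintegral_const_mul _ huK', lintegral_lintegral_swap huK.aemeasurable]
        congr 1
        exact lintegral_congr fun a => lintegral_const_mul _ (hK.comp measurable_prodMk_right)
    _ ≤ C ^ (q - 1) * ∫⁻ a, u a ^ q * C ∂μ := by gcongr with a; exact hcol a
    _ = C ^ q * ∫⁻ a, u a ^ q ∂μ := by
        rw [lintegral_mul_const _ (hu.pow_const q), ← sub_add_cancel q 1,
          ENNReal.rpow_add_of_nonneg _ _ (by linarith) zero_le_one, ENNReal.rpow_one,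
          add_sub_cancel_right]
        ring

theorem lintegral_rpow_le_of_le_lintegral_sub {X : Type*} [AddGroup X] [MeasurableSpace X]
    [MeasurableSub₂ X] {μ ν : Measure X} [SFinite μ] [SFinite ν] {k : X → ℝ≥0∞}
    (hk : Measurable k) (hk_neg : ∀ x, k (-x) = k x) {u : X → ℝ≥0∞} (hu : Measurable u)
    {C : ℝ≥0∞} {q : ℝ} (hq : 1 ≤ q) (hμ : ∀ a, ∫⁻ b, k (a - b) ∂μ ≤ C)
    (hν : ∀ a, ∫⁻ b, k (a - b) ∂ν ≤ C) (hu_le : ∀ a, u a ≤ ∫⁻ b, u b * k (a - b) ∂μ) :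
    ∫⁻ a, u a ^ q ∂ν ≤ C ^ q * ∫⁻ a, u a ^ q ∂μ :=
  lintegral_rpow_le_of_le_lintegral_kernel (K := fun a b => k (a - b)) (hk.comp measurable_sub)
    hu hq hu_le hμ fun b => by simpa only [← neg_sub b, hk_neg] using hν b

theorem Real.rpow_one_div_le_mul_of_le_rpow_mul {a b c q : ℝ} (ha : 0 ≤ a) (hb : 0 ≤ b)
    (hc : 0 ≤ c) (hq : 0 < q) (h : a ≤ c ^ q * b) : a ^ (1 / q) ≤ c * b ^ (1 / q) :=
  calc a ^ (1 / q) ≤ (c ^ q * b) ^ (1 / q) := Real.rpow_le_rpow ha h (by positivity)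
    _ = c * b ^ (1 / q) := by
      rw [Real.mul_rpow (by positivity) hb, ← Real.rpow_mul hc, mul_one_div_cancel hq.ne',
        Real.rpow_one]

noncomputable section

namespace WeightedMarcinkiewicz

def circleExp (k : ℤ) (s : ℝ) : ℂ := exp (I * k * s)

def torusExp {d : ℕ} (k : Fin d → ℤ) (x : Fin d → ℝ) : ℂ :=
  exp (I * ((∑ j, (k j : ℝ) * x j : ℝ) : ℂ))

def freqBox {d : ℕ} (B : Fin d → ℕ) : Finset (Fin d → ℤ) :=
  Finset.Icc (fun j => -(B j : ℤ)) (fun j => (B j : ℤ))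

def torusMean {d : ℕ} {E : Type*} [NormedAddCommGroup E] [NormedSpace ℝ E]
    (g : (Fin d → ℝ) → E) : E :=
  ((2 * Real.pi) ^ d)⁻¹ • ∫ x in torusCube d, g x

variable {d : ℕ}

lemma circleExp_add (a b : ℤ) (s : ℝ) :
    circleExp (a + b) s = circleExp a s * circleExp b s := by
  rw [circleExp, circleExp, circleExp, ← exp_add]; push_cast; ring_nf

lemma conj_circleExp (k : ℤ) (s : ℝ) : conj (circleExp k s) = circleExp (-k) s := by
  rw [circleExp, circleExp, ← exp_conj]; simp

lemma circleExp_neg_right (k : ℤ) (s : ℝ) : circleExp k (-s) = conj (circleExp k s) := by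
  rw [circleExp, circleExp, ← exp_conj]; simp

@[fun_prop]
lemma continuous_circleExp (k : ℤ) : Continuous (circleExp k) := by
  unfold circleExp; fun_prop

lemma integral_circleExp (k : ℤ) :
    ∫ s in Set.Icc 0 (2 * Real.pi), circleExp k s =
      if k = 0 then ((2 * Real.pi : ℝ) : ℂ) else 0 := by
  rw [integral_Icc_eq_integral_Ioc, ← intervalIntegral.integral_of_le (by positivity)]
  split_ifs with hk
  · simp [hk, circleExp]
  · have hc : I * k ≠ 0 := by simp [hk]
    have hperiod : exp (I * k * (2 * Real.pi)) = 1 := by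
      rw [← exp_int_mul_two_pi_mul_I k]; ring_nf
    simp only [circleExp]
    rw [integral_exp_mul_complex hc]
    simp [hperiod]

lemma torusExp_eq_prod (k : Fin d → ℤ) (x : Fin d → ℝ) :
    torusExp k x = ∏ j, circleExp (k j) (x j) := by
  simp only [torusExp, circleExp, ← exp_sum, mul_assoc]; push_cast; rw [Finset.mul_sum]

lemma torusExp_zero (x : Fin d → ℝ) : torusExp 0 x = 1 := by simp [torusExp]

lemma torusExp_add (k l : Fin d → ℤ) (x : Fin d → ℝ) :
    torusExp (k + l) x = torusExp k x * torusExp l x := by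
  simp only [torusExp_eq_prod, Pi.add_apply, circleExp_add, Finset.prod_mul_distrib]

lemma torusExp_sub (k : Fin d → ℤ) (x y : Fin d → ℝ) :
    torusExp k (x - y) = torusExp k x * torusExp (-k) y := by
  simp only [torusExp_eq_prod, ← Finset.prod_mul_distrib]
  refine Finset.prod_congr rfl fun j _ => ?_
  simp only [circleExp, Pi.sub_apply, Pi.neg_apply, ← exp_add]; push_cast; ring_nf

@[fun_prop]
lemma continuous_torusExp (k : Fin d → ℤ) : Continuous (torusExp k) := by
  unfold torusExp; fun_prop

lemma mem_freqBox {B : Fin d → ℕ} {k : Fin d → ℤ} :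
    k ∈ freqBox B ↔ ∀ j, -(B j : ℤ) ≤ k j ∧ k j ≤ B j := by
  simp only [freqBox, Finset.mem_Icc, Pi.le_def, ← forall_and]

lemma isTrigPoly_iff_exists_sum_torusExp {N : Fin d → ℕ} {f : (Fin d → ℝ) → ℂ} :
    IsTrigPoly N f ↔ ∃ c : (Fin d → ℤ) → ℂ, f = fun x => ∑ k ∈ freqBox N, c k * torusExp k x :=
  Iff.rfl

lemma _root_.IsTrigPoly.continuous {N : Fin d → ℕ} {f : (Fin d → ℝ) → ℂ}
    (hf : IsTrigPoly N f) : Continuous f := by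
  obtain ⟨c, rfl⟩ := isTrigPoly_iff_exists_sum_torusExp.mp hf
  fun_prop

lemma isTrigPoly_sum_mul_torusExp {α : Type*} (B : Fin d → ℕ) (s : Finset α) (φ : α → ℂ)
    (κ : α → Fin d → ℤ) (hκ : ∀ a ∈ s, κ a ∈ freqBox B) :
    IsTrigPoly B (fun x => ∑ a ∈ s, φ a * torusExp (κ a) x) := by
  refine isTrigPoly_iff_exists_sum_torusExp.mpr
    ⟨fun k => ∑ a ∈ s with κ a = k, φ a, funext fun x => ?_⟩
  rw [← Finset.sum_fiberwise_of_maps_to hκ]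
  refine Finset.sum_congr rfl fun k _ => ?_
  rw [Finset.sum_mul]
  exact Finset.sum_congr rfl fun a ha => by rw [(Finset.mem_filter.mp ha).2]

lemma isCompact_torusCube : IsCompact (torusCube d) :=
  isCompact_univ_pi fun _ => isCompact_Icc

lemma integrableOn_torusCube {E : Type*} [NormedAddCommGroup E] {g : (Fin d → ℝ) → E}
    (hg : Continuous g) : IntegrableOn g (torusCube d) :=
  hg.continuousOn.integrableOn_compact isCompact_torusCube

lemma setIntegral_torusCube_prod (g : Fin d → ℝ → ℂ) :
    ∫ x in torusCube d, ∏ j, g j (x j) = ∏ j, ∫ s in Set.Icc 0 (2 * Real.pi), g j s := by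
  rw [torusCube, volume_pi, Measure.restrict_pi_pi, integral_fintype_prod_eq_prod]

lemma integral_torusExp (k : Fin d → ℤ) :
    ∫ x in torusCube d, torusExp k x = if k = 0 then (((2 * Real.pi) ^ d : ℝ) : ℂ) else 0 := by
  simp only [torusExp_eq_prod, setIntegral_torusCube_prod, integral_circleExp,
    Finset.prod_ite_zero, Finset.prod_const, Finset.card_univ, Fintype.card_fin, funext_iff,
    Finset.mem_univ, true_imp_iff, Pi.zero_apply]
  push_cast; rfl

lemma torusMean_torusExp (k : Fin d → ℤ) :
    torusMean (torusExp k) = if k = 0 then 1 else 0 := by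
  rw [torusMean, integral_torusExp]
  split_ifs
  · rw [Complex.real_smul]; push_cast; field_simp
  · simp

lemma torusMean_sum_mul_torusExp {α : Type*} (s : Finset α) (φ : α → ℂ)
    (κ : α → Fin d → ℤ) :
    torusMean (fun x => ∑ a ∈ s, φ a * torusExp (κ a) x) =
      ∑ a ∈ s, if κ a = 0 then φ a else 0 := by
  rw [torusMean, integral_finsetSum s (f := fun a x => φ a * torusExp (κ a) x)
    fun a _ => integrableOn_torusCube (by fun_prop), Finset.smul_sum]
  refine Finset.sum_congr rfl fun a _ => ?_
  rw [integral_const_mul, ← mul_smul_comm, ← torusMean, torusMean_torusExp]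
  split_ifs <;> simp

lemma torusMean_ofReal (g : (Fin d → ℝ) → ℝ) :
    torusMean (fun x => (g x : ℂ)) = ((torusMean g : ℝ) : ℂ) := by
  rw [torusMean, torusMean, integral_complex_ofReal, real_smul, smul_eq_mul, ofReal_mul]

lemma norm_torusMean_le (g : (Fin d → ℝ) → ℂ) :
    ‖torusMean g‖ ≤ torusMean (fun x => ‖g x‖) := by
  rw [torusMean, torusMean, norm_smul, Real.norm_of_nonneg (by positivity), smul_eq_mul]
  gcongr
  exact norm_integral_le_integral_norm _

lemma torusMean_mono {g h : (Fin d → ℝ) → ℝ} (hg : Continuous g) (hh : Continuous h)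
    (hgh : ∀ x ∈ torusCube d, g x ≤ h x) : torusMean g ≤ torusMean h := by
  rw [torusMean, torusMean, smul_eq_mul, smul_eq_mul]
  refine mul_le_mul_of_nonneg_left ?_ (by positivity)
  exact setIntegral_mono_on (integrableOn_torusCube hg) (integrableOn_torusCube hh)
    (MeasurableSet.univ_pi fun _ => measurableSet_Icc) hgh

lemma torusMean_const_mul (a : ℝ) (g : (Fin d → ℝ) → ℝ) :
    torusMean (fun x => a * g x) = a * torusMean g := by
  rw [torusMean, torusMean, integral_const_mul, smul_eq_mul, smul_eq_mul, mul_left_comm]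

lemma torusMean_nonneg {g : (Fin d → ℝ) → ℝ} (hg : ∀ x, 0 ≤ g x) : 0 ≤ torusMean g :=
  smul_nonneg (by positivity) (integral_nonneg hg)

-- `fejer n` has the frequencies `|k| < n`: it is the classical Fejér kernel `F_{n-1}`.
def fejer (n : ℕ) (s : ℝ) : ℝ := normSq (∑ l ∈ Finset.range n, circleExp l s) / n

def fejerCoeff (n : ℕ) (k : ℤ) : ℂ := ((n - k.natAbs : ℕ) : ℂ) / n

lemma fejer_nonneg (n : ℕ) (s : ℝ) : 0 ≤ fejer n s :=
  div_nonneg (normSq_nonneg _) n.cast_nonneg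

lemma fejer_neg (n : ℕ) (s : ℝ) : fejer n (-s) = fejer n s := by
  simp only [fejer, circleExp_neg_right, ← map_sum, normSq_conj]

@[fun_prop]
lemma continuous_fejer (n : ℕ) : Continuous (fejer n) := by
  unfold fejer; fun_prop

lemma fejerCoeff_zero {n : ℕ} (hn : n ≠ 0) : fejerCoeff n 0 = 1 := by
  simp [fejerCoeff, hn]

lemma card_filter_sub_eq (n : ℕ) (k : ℤ) :
    ({p ∈ Finset.range n ×ˢ Finset.range n | (p.1 : ℤ) - p.2 = k} : Finset _).card =
      n - k.natAbs := by
  rw [← Finset.card_range (n - k.natAbs)]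
  apply Finset.card_nbij' (fun p => min p.1 p.2) (fun r => (r + k.toNat, r + (-k).toNat))
  · intro p hp
    simp only [Finset.mem_coe, Finset.mem_filter, Finset.mem_product, Finset.mem_range] at hp ⊢
    omega
  · intro r hr
    simp only [Finset.mem_coe, Finset.mem_filter, Finset.mem_product, Finset.mem_range] at hr ⊢
    omega
  · intro p hp
    simp only [Finset.mem_coe, Finset.mem_filter, Finset.mem_product, Finset.mem_range] at hp
    ext <;> simp <;> omega
  · intro r hr
    simp only [Finset.mem_coe, Finset.mem_range] at hr
    simp
    omega

lemma fejer_eq_sum {n B : ℕ} (hB : n ≤ B) (s : ℝ) :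
    (fejer n s : ℂ) = ∑ k ∈ Finset.Icc (-(B : ℤ)) B, fejerCoeff n k * circleExp k s := by
  rw [fejer, ofReal_div, ← mul_conj, map_sum, Finset.sum_mul_sum, ← Finset.sum_product',
    ← Finset.sum_fiberwise_of_maps_to (g := fun p : ℕ × ℕ => (p.1 : ℤ) - p.2)
      (t := Finset.Icc (-(B : ℤ)) B) fun p hp => by
        simp only [Finset.mem_product, Finset.mem_range] at hp
        simp only [Finset.mem_Icc]
        omega,
    Finset.sum_div]
  refine Finset.sum_congr rfl fun k _ => ?_
  rw [Finset.sum_congr rfl fun p hp => by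
      rw [conj_circleExp, ← circleExp_add, ← sub_eq_add_neg, (Finset.mem_filter.mp hp).2],
    Finset.sum_const, card_filter_sub_eq, nsmul_eq_mul, fejerCoeff, ofReal_natCast]
  ring

def vallePoussin (n : ℕ) (s : ℝ) : ℝ := 2 * fejer (2 * n) s - fejer n s

def vallePoussinMajorant (n : ℕ) (s : ℝ) : ℝ := 2 * fejer (2 * n) s + fejer n s

def vallePoussinCoeff (n : ℕ) (k : ℤ) : ℂ := 2 * fejerCoeff (2 * n) k - fejerCoeff n k

def vallePoussinMajorantCoeff (n : ℕ) (k : ℤ) : ℂ :=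
  2 * fejerCoeff (2 * n) k + fejerCoeff n k

lemma abs_vallePoussin_le (n : ℕ) (s : ℝ) : |vallePoussin n s| ≤ vallePoussinMajorant n s := by
  have := fejer_nonneg (2 * n) s
  have := fejer_nonneg n s
  rw [vallePoussin, vallePoussinMajorant, abs_le]
  constructor <;> linarith

lemma vallePoussinMajorant_neg (n : ℕ) (s : ℝ) :
    vallePoussinMajorant n (-s) = vallePoussinMajorant n s := by
  simp only [vallePoussinMajorant, fejer_neg]

lemma vallePoussin_eq_sum (n : ℕ) (s : ℝ) :
    (vallePoussin n s : ℂ) = ∑ k ∈ Finset.Icc (-((2 * n : ℕ) : ℤ)) (2 * n : ℕ),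
      vallePoussinCoeff n k * circleExp k s := by
  rw [vallePoussin, ofReal_sub, ofReal_mul, fejer_eq_sum le_rfl,
    fejer_eq_sum (n := n) (B := 2 * n) (by omega), Finset.mul_sum, ← Finset.sum_sub_distrib]
  exact Finset.sum_congr rfl fun k _ => by rw [vallePoussinCoeff]; push_cast; ring

lemma vallePoussinMajorant_eq_sum (n : ℕ) (s : ℝ) :
    (vallePoussinMajorant n s : ℂ) = ∑ k ∈ Finset.Icc (-((2 * n : ℕ) : ℤ)) (2 * n : ℕ),
      vallePoussinMajorantCoeff n k * circleExp k s := by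
  rw [vallePoussinMajorant, ofReal_add, ofReal_mul, fejer_eq_sum le_rfl,
    fejer_eq_sum (n := n) (B := 2 * n) (by omega), Finset.mul_sum, ← Finset.sum_add_distrib]
  exact Finset.sum_congr rfl fun k _ => by rw [vallePoussinMajorantCoeff]; push_cast; ring

-- For `|k| ≤ m`, `fejerCoeff m k = 1 - |k| / m`; the `|k|`-terms cancel in `2 F_{2n} - F_n`.
lemma vallePoussinCoeff_eq_one {n : ℕ} {k : ℤ} (hn : n ≠ 0) (hk : k.natAbs ≤ n) :
    vallePoussinCoeff n k = 1 := by
  have hn' : (n : ℂ) ≠ 0 := Nat.cast_ne_zero.mpr hn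
  rw [vallePoussinCoeff, fejerCoeff, fejerCoeff, Nat.cast_sub hk, Nat.cast_sub (by omega)]
  push_cast
  field_simp
  ring

lemma vallePoussinMajorantCoeff_zero {n : ℕ} (hn : n ≠ 0) :
    vallePoussinMajorantCoeff n 0 = 3 := by
  rw [vallePoussinMajorantCoeff, fejerCoeff_zero hn, fejerCoeff_zero (by omega)]
  norm_num

def vallePoussinPi (N : Fin d → ℕ) (x : Fin d → ℝ) : ℝ := ∏ j, vallePoussin (N j) (x j)

def vallePoussinMajorantPi (N : Fin d → ℕ) (x : Fin d → ℝ) : ℝ :=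
  ∏ j, vallePoussinMajorant (N j) (x j)

lemma abs_vallePoussinPi_le (N : Fin d → ℕ) (x : Fin d → ℝ) :
    |vallePoussinPi N x| ≤ vallePoussinMajorantPi N x := by
  rw [vallePoussinPi, Finset.abs_prod]
  exact Finset.prod_le_prod (fun j _ => abs_nonneg _) fun j _ => abs_vallePoussin_le _ _

lemma vallePoussinMajorantPi_nonneg (N : Fin d → ℕ) (x : Fin d → ℝ) :
    0 ≤ vallePoussinMajorantPi N x :=
  (abs_nonneg _).trans (abs_vallePoussinPi_le N x)

lemma vallePoussinMajorantPi_neg (N : Fin d → ℕ) (x : Fin d → ℝ) :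
    vallePoussinMajorantPi N (-x) = vallePoussinMajorantPi N x := by
  simp only [vallePoussinMajorantPi, Pi.neg_apply, vallePoussinMajorant_neg]

@[fun_prop]
lemma continuous_vallePoussinMajorantPi (N : Fin d → ℕ) :
    Continuous (vallePoussinMajorantPi N) := by
  unfold vallePoussinMajorantPi vallePoussinMajorant; fun_prop

lemma prod_eq_sum_torusExp (B : Fin d → ℕ) (g : Fin d → ℝ → ℝ) (a : Fin d → ℤ → ℂ)
    (hg : ∀ j s, (g j s : ℂ) = ∑ k ∈ Finset.Icc (-(B j : ℤ)) (B j), a j k * circleExp k s)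
    (x : Fin d → ℝ) :
    ((∏ j, g j (x j) : ℝ) : ℂ) = ∑ k ∈ freqBox B, (∏ j, a j (k j)) * torusExp k x := by
  rw [ofReal_prod, Finset.prod_congr rfl fun j _ => hg j (x j), Finset.prod_univ_sum, freqBox,
    Pi.Icc_eq]
  exact Finset.sum_congr rfl fun k _ => by rw [torusExp_eq_prod, Finset.prod_mul_distrib]

section Reproducing

variable {N : Fin d → ℕ} {f : (Fin d → ℝ) → ℂ}

lemma vallePoussinMajorantPi_sub_eq_sum (x y : Fin d → ℝ) :
    (vallePoussinMajorantPi N (x - y) : ℂ) = ∑ k ∈ freqBox (fun j => 2 * N j),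
      ((∏ j, vallePoussinMajorantCoeff (N j) (k j)) * torusExp k x) * torusExp (-k) y := by
  rw [vallePoussinMajorantPi, prod_eq_sum_torusExp _ _ _
    (fun j => vallePoussinMajorant_eq_sum (N j))]
  exact Finset.sum_congr rfl fun k _ => by rw [torusExp_sub]; ring

lemma isTrigPoly_vallePoussinMajorantPi_sub (x : Fin d → ℝ) :
    IsTrigPoly (fun j => 3 * N j) fun y => (vallePoussinMajorantPi N (x - y) : ℂ) := by
  simp_rw [vallePoussinMajorantPi_sub_eq_sum x]
  refine isTrigPoly_sum_mul_torusExp _ _ _ _ fun k hk => mem_freqBox.mpr fun j => ?_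
  have := mem_freqBox.mp hk j
  simp only [Pi.neg_apply]
  push_cast at this ⊢
  omega

lemma torusMean_vallePoussinMajorantPi_sub (hN : ∀ j, N j ≠ 0) (x : Fin d → ℝ) :
    torusMean (fun y => vallePoussinMajorantPi N (x - y)) = 3 ^ d := by
  have h : torusMean (fun y => (vallePoussinMajorantPi N (x - y) : ℂ)) = 3 ^ d := by
    simp_rw [vallePoussinMajorantPi_sub_eq_sum x, torusMean_sum_mul_torusExp, neg_eq_zero]
    rw [Finset.sum_ite_eq', if_pos (mem_freqBox.mpr fun j => by simp only [Pi.zero_apply]; omega)]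
    simp [vallePoussinMajorantCoeff_zero (hN _), torusExp_zero]
  exact_mod_cast (torusMean_ofReal _).symm.trans h

lemma sum_mul_vallePoussinPi_sub_eq_sum (c : (Fin d → ℤ) → ℂ) (x y : Fin d → ℝ) :
    (∑ l ∈ freqBox N, c l * torusExp l y) * (vallePoussinPi N (x - y) : ℂ) =
      ∑ p ∈ freqBox N ×ˢ freqBox (fun j => 2 * N j),
        (c p.1 * (∏ j, vallePoussinCoeff (N j) (p.2 j)) * torusExp p.2 x) *
          torusExp (p.1 - p.2) y := by
  rw [vallePoussinPi, prod_eq_sum_torusExp _ _ _ (fun j => vallePoussin_eq_sum (N j)),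
    Finset.sum_mul_sum, ← Finset.sum_product']
  exact Finset.sum_congr rfl fun p _ => by
    rw [torusExp_sub, sub_eq_add_neg, torusExp_add]; ring

lemma _root_.IsTrigPoly.mul_vallePoussinPi_sub (hf : IsTrigPoly N f) (x : Fin d → ℝ) :
    IsTrigPoly (fun j => 3 * N j) fun y => f y * vallePoussinPi N (x - y) := by
  obtain ⟨c, rfl⟩ := isTrigPoly_iff_exists_sum_torusExp.mp hf
  simp_rw [sum_mul_vallePoussinPi_sub_eq_sum c x]
  refine isTrigPoly_sum_mul_torusExp _ _ _ _ fun p hp => mem_freqBox.mpr fun j => ?_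
  rw [Finset.mem_product] at hp
  have h1 := mem_freqBox.mp hp.1 j
  have h2 := mem_freqBox.mp hp.2 j
  simp only [Pi.sub_apply]
  push_cast at h2 ⊢
  omega

lemma _root_.IsTrigPoly.torusMean_mul_vallePoussinPi_sub (hN : ∀ j, N j ≠ 0)
    (hf : IsTrigPoly N f) (x : Fin d → ℝ) :
    torusMean (fun y => f y * vallePoussinPi N (x - y)) = f x := by
  obtain ⟨c, rfl⟩ := isTrigPoly_iff_exists_sum_torusExp.mp hf
  simp_rw [sum_mul_vallePoussinPi_sub_eq_sum c x, torusMean_sum_mul_torusExp, sub_eq_zero,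
    Finset.sum_product, Finset.sum_ite_eq]
  refine Finset.sum_congr rfl fun l hl => ?_
  have hl := mem_freqBox.mp hl
  rw [if_pos (mem_freqBox.mpr fun j => by have := hl j; push_cast; omega),
    Finset.prod_eq_one fun j _ => vallePoussinCoeff_eq_one (hN j) (by have := hl j; omega),
    mul_one]

lemma norm_le_torusMean_norm_mul_vallePoussinMajorantPi (hN : ∀ j, N j ≠ 0)
    (hf : IsTrigPoly N f) (x : Fin d → ℝ) :
    ‖f x‖ ≤ torusMean (fun y => ‖f y‖ * vallePoussinMajorantPi N (x - y)) := by
  have := hf.continuous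
  calc ‖f x‖ = ‖torusMean (fun y => f y * vallePoussinPi N (x - y))‖ := by
        rw [hf.torusMean_mul_vallePoussinPi_sub hN]
    _ ≤ torusMean (fun y => ‖f y * vallePoussinPi N (x - y)‖) := norm_torusMean_le _
    _ ≤ torusMean (fun y => ‖f y‖ * vallePoussinMajorantPi N (x - y)) := by
        refine torusMean_mono (hf.mul_vallePoussinPi_sub x).continuous.norm (by fun_prop)
          fun y _ => ?_
        rw [norm_mul, norm_real, Real.norm_eq_abs]
        exact mul_le_mul_of_nonneg_left (abs_vallePoussinPi_le N _) (norm_nonneg _)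

lemma norm_le_supNorm (hf : Continuous f) {x : Fin d → ℝ} (hx : x ∈ torusCube d) :
    ‖f x‖ ≤ supNorm d f := by
  refine le_csSup ?_ ⟨x, hx, rfl⟩
  obtain ⟨C, hC⟩ := isCompact_torusCube.exists_bound_of_continuousOn hf.continuousOn
  exact ⟨C, by rintro r ⟨y, hy, rfl⟩; simpa using hC y hy⟩

lemma norm_le_mul_supNorm (hN : ∀ j, N j ≠ 0) (hf : IsTrigPoly N f) (x : Fin d → ℝ) :
    ‖f x‖ ≤ 3 ^ d * supNorm d f := by
  have := hf.continuous
  calc ‖f x‖ ≤ torusMean (fun y => ‖f y‖ * vallePoussinMajorantPi N (x - y)) :=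
        norm_le_torusMean_norm_mul_vallePoussinMajorantPi hN hf x
    _ ≤ torusMean (fun y => supNorm d f * vallePoussinMajorantPi N (x - y)) := by
        refine torusMean_mono (by fun_prop) (by fun_prop) fun y hy => ?_
        exact mul_le_mul_of_nonneg_right (norm_le_supNorm this hy)
          (vallePoussinMajorantPi_nonneg N _)
    _ = 3 ^ d * supNorm d f := by
        rw [torusMean_const_mul, torusMean_vallePoussinMajorantPi_sub hN, mul_comm]

end Reproducing

def IsExactQuadrature {m : ℕ} (N : Fin d → ℕ) (ξ : Fin m → (Fin d → ℝ)) (w : Fin m → ℝ) :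
    Prop :=
  ∀ g, IsTrigPoly N g → ∑ ν, (w ν : ℂ) * g (ξ ν) = torusMean g

def torusMeasure (d : ℕ) : Measure (Fin d → ℝ) :=
  ENNReal.ofReal ((2 * Real.pi) ^ d)⁻¹ • volume.restrict (torusCube d)

def weightedDiracs {m : ℕ} (ξ : Fin m → (Fin d → ℝ)) (w : Fin m → ℝ) : Measure (Fin d → ℝ) :=
  ∑ ν, ENNReal.ofReal (w ν) • Measure.dirac (ξ ν)

instance : SFinite (torusMeasure d) := by unfold torusMeasure; infer_instance

instance {m : ℕ} (ξ : Fin m → (Fin d → ℝ)) (w : Fin m → ℝ) :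
    IsFiniteMeasure (weightedDiracs ξ w) where
  measure_univ_lt_top := by simp [weightedDiracs, ENNReal.sum_lt_top]

lemma lintegral_torusMeasure_ofReal {g : (Fin d → ℝ) → ℝ} (hg : Continuous g)
    (hg0 : ∀ x, 0 ≤ g x) :
    ∫⁻ x, ENNReal.ofReal (g x) ∂torusMeasure d = ENNReal.ofReal (torusMean g) := by
  rw [torusMeasure, lintegral_smul_measure, ← ofReal_integral_eq_lintegral_ofReal
    (integrableOn_torusCube hg) (Filter.Eventually.of_forall hg0), smul_eq_mul,
    ← ENNReal.ofReal_mul (by positivity), torusMean, smul_eq_mul]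

lemma lintegral_weightedDiracs_ofReal {m : ℕ} {ξ : Fin m → (Fin d → ℝ)} {w : Fin m → ℝ}
    (hw : ∀ ν, 0 ≤ w ν) {g : (Fin d → ℝ) → ℝ} (hg0 : ∀ x, 0 ≤ g x) :
    ∫⁻ x, ENNReal.ofReal (g x) ∂weightedDiracs ξ w = ENNReal.ofReal (∑ ν, w ν * g (ξ ν)) := by
  rw [weightedDiracs, lintegral_finsetSum_measure,
    ENNReal.ofReal_sum_of_nonneg fun ν _ => mul_nonneg (hw ν) (hg0 _)]
  refine Finset.sum_congr rfl fun ν _ => ?_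
  rw [lintegral_smul_measure, lintegral_dirac, smul_eq_mul, ENNReal.ofReal_mul (hw ν)]

section Quadrature

variable {N : Fin d → ℕ} {f : (Fin d → ℝ) → ℂ} {m : ℕ} {ξ : Fin m → (Fin d → ℝ)}
  {w : Fin m → ℝ}

lemma lintegral_torusMeasure_vallePoussinMajorantPi_sub (hN : ∀ j, N j ≠ 0) (a : Fin d → ℝ) :
    ∫⁻ b, ENNReal.ofReal (vallePoussinMajorantPi N (a - b)) ∂torusMeasure d =
      ENNReal.ofReal (3 ^ d) := by
  rw [lintegral_torusMeasure_ofReal (by fun_prop) fun _ => vallePoussinMajorantPi_nonneg N _,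
    torusMean_vallePoussinMajorantPi_sub hN]

lemma lintegral_rpow_le_of_le_lintegral_vallePoussinMajorantPi {μ ν : Measure (Fin d → ℝ)}
    [SFinite μ] [SFinite ν] (hf : Continuous f)
    (hμ : ∀ a, ∫⁻ b, ENNReal.ofReal (vallePoussinMajorantPi N (a - b)) ∂μ =
      ENNReal.ofReal (3 ^ d))
    (hν : ∀ a, ∫⁻ b, ENNReal.ofReal (vallePoussinMajorantPi N (a - b)) ∂ν =
      ENNReal.ofReal (3 ^ d))
    (hf_le : ∀ a, ENNReal.ofReal ‖f a‖ ≤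
      ∫⁻ b, ENNReal.ofReal (‖f b‖ * vallePoussinMajorantPi N (a - b)) ∂μ)
    {q : ℝ} (hq : 1 ≤ q) :
    ∫⁻ a, ENNReal.ofReal (‖f a‖ ^ q) ∂ν ≤
      ENNReal.ofReal ((3 ^ d) ^ q) * ∫⁻ a, ENNReal.ofReal (‖f a‖ ^ q) ∂μ := by
  have h := lintegral_rpow_le_of_le_lintegral_sub
    (continuous_vallePoussinMajorantPi N).measurable.ennreal_ofReal
    (fun x => by simp only [vallePoussinMajorantPi_neg]) hf.norm.measurable.ennreal_ofReal hq
    (fun a => (hμ a).le) (fun a => (hν a).le)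
    (fun a => by simpa only [← ENNReal.ofReal_mul (norm_nonneg _)] using hf_le a)
  simpa only [ENNReal.ofReal_rpow_of_nonneg (norm_nonneg _) (by linarith : 0 ≤ q),
    ENNReal.ofReal_rpow_of_nonneg (by positivity : (0 : ℝ) ≤ 3 ^ d) (by linarith : 0 ≤ q)]
    using h

variable (hw : ∀ ν, 0 ≤ w ν) (hN : ∀ j, N j ≠ 0)
  (H : IsExactQuadrature (fun j => 3 * N j) ξ w) (hf : IsTrigPoly N f)
include hN H

lemma sum_weight_mul_vallePoussinMajorantPi_sub (x : Fin d → ℝ) :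
    ∑ ν, w ν * vallePoussinMajorantPi N (x - ξ ν) = 3 ^ d := by
  have h := H _ (isTrigPoly_vallePoussinMajorantPi_sub x)
  rw [torusMean_ofReal (fun y => vallePoussinMajorantPi N (x - y)),
    torusMean_vallePoussinMajorantPi_sub hN] at h
  exact_mod_cast h

include hw

lemma lintegral_weightedDiracs_vallePoussinMajorantPi_sub (a : Fin d → ℝ) :
    ∫⁻ b, ENNReal.ofReal (vallePoussinMajorantPi N (a - b)) ∂weightedDiracs ξ w =
      ENNReal.ofReal (3 ^ d) := by
  rw [lintegral_weightedDiracs_ofReal hw fun _ => vallePoussinMajorantPi_nonneg N _,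
    sum_weight_mul_vallePoussinMajorantPi_sub hN H]

include hf

lemma norm_le_sum_weight_mul_norm_mul_vallePoussinMajorantPi (x : Fin d → ℝ) :
    ‖f x‖ ≤ ∑ ν, w ν * (‖f (ξ ν)‖ * vallePoussinMajorantPi N (x - ξ ν)) := by
  calc ‖f x‖ = ‖∑ ν, (w ν : ℂ) * (f (ξ ν) * vallePoussinPi N (x - ξ ν))‖ := by
        rw [H _ (hf.mul_vallePoussinPi_sub x), hf.torusMean_mul_vallePoussinPi_sub hN]
    _ ≤ ∑ ν, ‖(w ν : ℂ) * (f (ξ ν) * vallePoussinPi N (x - ξ ν))‖ := norm_sum_le _ _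
    _ ≤ ∑ ν, w ν * (‖f (ξ ν)‖ * vallePoussinMajorantPi N (x - ξ ν)) := by
        refine Finset.sum_le_sum fun ν _ => ?_
        rw [norm_mul, norm_mul, norm_real, norm_real, Real.norm_of_nonneg (hw ν),
          Real.norm_eq_abs]
        exact mul_le_mul_of_nonneg_left
          (mul_le_mul_of_nonneg_left (abs_vallePoussinPi_le N _) (norm_nonneg _)) (hw ν)

lemma supNorm_le_mul_sSup :
    supNorm d f ≤ 3 ^ d * sSup {r : ℝ | ∃ ν, 0 < w ν ∧ r = ‖f (ξ ν)‖} := by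
  set S := sSup {r : ℝ | ∃ ν, 0 < w ν ∧ r = ‖f (ξ ν)‖}
  have hS : 0 ≤ S := Real.sSup_nonneg <| by rintro r ⟨ν, -, rfl⟩; exact norm_nonneg _
  have hbdd : BddAbove {r : ℝ | ∃ ν, 0 < w ν ∧ r = ‖f (ξ ν)‖} :=
    (Set.finite_range fun ν => ‖f (ξ ν)‖).bddAbove.mono <| by
      rintro r ⟨ν, -, rfl⟩; exact ⟨ν, rfl⟩
  refine Real.sSup_le (fun r ⟨x, _, hr⟩ => hr ▸ ?_) (by positivity)
  calc ‖f x‖ ≤ ∑ ν, w ν * (‖f (ξ ν)‖ * vallePoussinMajorantPi N (x - ξ ν)) :=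
        norm_le_sum_weight_mul_norm_mul_vallePoussinMajorantPi hw hN H hf x
    _ ≤ ∑ ν, w ν * (S * vallePoussinMajorantPi N (x - ξ ν)) := by
        refine Finset.sum_le_sum fun ν _ => ?_
        rcases (hw ν).eq_or_lt with h | h
        · simp [← h]
        · gcongr
          · exact vallePoussinMajorantPi_nonneg N _
          · exact le_csSup hbdd ⟨ν, h, rfl⟩
    _ = 3 ^ d * S := by
        simp_rw [mul_left_comm _ S, ← Finset.mul_sum,
          sum_weight_mul_vallePoussinMajorantPi_sub hN H, mul_comm]

variable {q : ℝ} (hq : 1 ≤ q)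
include hq

lemma torusMean_rpow_le_mul_sum :
    torusMean (fun x => ‖f x‖ ^ q) ≤ (3 ^ d) ^ q * ∑ ν, w ν * ‖f (ξ ν)‖ ^ q := by
  have hc : Continuous fun x => ‖f x‖ ^ q :=
    hf.continuous.norm.rpow_const fun _ => Or.inr (by linarith)
  have h := lintegral_rpow_le_of_le_lintegral_vallePoussinMajorantPi (μ := weightedDiracs ξ w)
    (ν := torusMeasure d) hf.continuous
    (lintegral_weightedDiracs_vallePoussinMajorantPi_sub hw hN H)
    (lintegral_torusMeasure_vallePoussinMajorantPi_sub hN) (fun a => ?_) hq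
  · rwa [lintegral_torusMeasure_ofReal hc fun _ => by positivity,
      lintegral_weightedDiracs_ofReal hw fun _ => by positivity,
      ← ENNReal.ofReal_mul (by positivity), ENNReal.ofReal_le_ofReal_iff (mul_nonneg
        (by positivity) (Finset.sum_nonneg fun ν _ => mul_nonneg (hw ν) (by positivity)))] at h
  · rw [lintegral_weightedDiracs_ofReal hw fun _ => mul_nonneg (norm_nonneg _)
      (vallePoussinMajorantPi_nonneg N _)]
    exact ENNReal.ofReal_le_ofReal
      (norm_le_sum_weight_mul_norm_mul_vallePoussinMajorantPi hw hN H hf a)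

lemma sum_rpow_le_mul_torusMean :
    ∑ ν, w ν * ‖f (ξ ν)‖ ^ q ≤ (3 ^ d) ^ q * torusMean (fun x => ‖f x‖ ^ q) := by
  have := hf.continuous
  have hc : Continuous fun x => ‖f x‖ ^ q :=
    hf.continuous.norm.rpow_const fun _ => Or.inr (by linarith)
  have h := lintegral_rpow_le_of_le_lintegral_vallePoussinMajorantPi (μ := torusMeasure d)
    (ν := weightedDiracs ξ w) hf.continuous (lintegral_torusMeasure_vallePoussinMajorantPi_sub hN)
    (lintegral_weightedDiracs_vallePoussinMajorantPi_sub hw hN H) (fun a => ?_) hq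
  · rwa [lintegral_torusMeasure_ofReal hc fun _ => by positivity,
      lintegral_weightedDiracs_ofReal hw fun _ => by positivity,
      ← ENNReal.ofReal_mul (by positivity), ENNReal.ofReal_le_ofReal_iff
        (mul_nonneg (by positivity) (torusMean_nonneg fun _ => by positivity))] at h
  · rw [lintegral_torusMeasure_ofReal (by fun_prop) fun _ => mul_nonneg (norm_nonneg _)
      (vallePoussinMajorantPi_nonneg N _)]
    exact ENNReal.ofReal_le_ofReal (norm_le_torusMean_norm_mul_vallePoussinMajorantPi hN hf a)

end Quadrature

end WeightedMarcinkiewicz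

end

open WeightedMarcinkiewicz in
theorem weighted_marcinkiewicz (d : ℕ) :
    ∃ C₁ C₂ : ℝ, 0 < C₁ ∧ 0 < C₂ ∧
      ∀ N : Fin d → ℕ, (∀ j, 1 ≤ N j) →
      ∀ (m : ℕ) (ξ : Fin m → (Fin d → ℝ)) (w : Fin m → ℝ), (∀ ν, 0 ≤ w ν) →
      (∀ f : (Fin d → ℝ) → ℂ, IsTrigPoly (fun j => 3 * N j) f →
        ∑ ν, (w ν : ℂ) * f (ξ ν) =
          (((2 * Real.pi) ^ d : ℝ) : ℂ)⁻¹ * ∫ x in torusCube d, f x) →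
      ∀ f : (Fin d → ℝ) → ℂ, IsTrigPoly N f →
        (∀ q : ℝ, 1 ≤ q →
          C₁ * LqNorm d q f ≤ (∑ ν, w ν * ‖f (ξ ν)‖ ^ q) ^ (1 / q) ∧
          (∑ ν, w ν * ‖f (ξ ν)‖ ^ q) ^ (1 / q) ≤ C₂ * LqNorm d q f) ∧
        (C₁ * supNorm d f ≤ sSup {r : ℝ | ∃ ν, 0 < w ν ∧ r = ‖f (ξ ν)‖} ∧
          sSup {r : ℝ | ∃ ν, 0 < w ν ∧ r = ‖f (ξ ν)‖} ≤ C₂ * supNorm d f) := by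
  refine ⟨(3 ^ d)⁻¹, 3 ^ d, by positivity, by positivity, fun N hN m ξ w hw H f hf => ?_⟩
  have hN' : ∀ j, N j ≠ 0 := fun j => Nat.one_le_iff_ne_zero.mp (hN j)
  have H' : IsExactQuadrature (fun j => 3 * N j) ξ w := fun g hg => by
    rw [H g hg, torusMean, Complex.real_smul, Complex.ofReal_inv]
  have hLq (q : ℝ) : LqNorm d q f = torusMean (fun x => ‖f x‖ ^ q) ^ (1 / q) := rfl
  have hmean (q : ℝ) : 0 ≤ torusMean (fun x => ‖f x‖ ^ q) := torusMean_nonneg fun _ => by positivity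
  have hsum (q : ℝ) : 0 ≤ ∑ ν, w ν * ‖f (ξ ν)‖ ^ q :=
    Finset.sum_nonneg fun ν _ => mul_nonneg (hw ν) (by positivity)
  refine ⟨fun q hq => ⟨?_, ?_⟩, ?_, ?_⟩
  · rw [inv_mul_le_iff₀ (by positivity), hLq]
    exact Real.rpow_one_div_le_mul_of_le_rpow_mul (hmean q) (hsum q) (by positivity)
      (by linarith) (torusMean_rpow_le_mul_sum hw hN' H' hf hq)
  · rw [hLq]
    exact Real.rpow_one_div_le_mul_of_le_rpow_mul (hsum q) (hmean q) (by positivity)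
      (by linarith) (sum_rpow_le_mul_torusMean hw hN' H' hf hq)
  · rw [inv_mul_le_iff₀ (by positivity)]
    exact supNorm_le_mul_sSup hw hN' H' hf
  · have hS : 0 ≤ supNorm d f := Real.sSup_nonneg <| by rintro r ⟨x, -, rfl⟩; exact norm_nonneg _
    exact Real.sSup_le (by rintro r ⟨ν, -, rfl⟩; exact norm_le_mul_supNorm hN' hf _)
      (by positivity)
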